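/- Let Z be a complex number with |Z| < t_m, set α = sqrt(1 + |Z|/t_m) + sqrt(1 − |Z|/t_m), and let Ω be the n×n block matrix (α/2)·1_n + (1/(α t_m))·[[0, conj(Z) P_m], [Z P_m, 0]]. Then Ω is Hermitian positive definite and Ω² = M(Z); that is, Ω is the unique positive definite square root of M(Z). -/

import Mathlib

/-!
Write `M(Z) = 1 + B` with `B = [[0, conj(Z/t_m) P_m], [(Z/t_m) P_m, 0]]`: a Hermitian matrix
with `B² = r²`, where `r = |Z|/t_m < 1`. Since `α² = 2 + 2√(1 - r²)` gives
`(α/2)² + (r/α)² = 1`, expanding the square of `Ω = α/2 + B/α` yields `1 + B`. With `β = r/α`,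
the Hermitian matrix `C = β + B/α` satisfies `C² = 2βC`, so it is a nonnegative multiple of `CᴴC`
and hence positive semidefinite; as `β < α/2`, `Ω = (α/2 - β) + C` is positive definite.
Uniqueness is that of positive semidefinite square roots.
-/
open Matrix Complex ComplexOrder

/-- The `2m × 2m` tridiagonal Hamiltonian with diagonal entries `z 1, …, z n`
(1-based) and symmetric off-diagonal entries `t 1, …, t (n-1)`. -/
noncomputable def Hop (m : ℕ) (t : ℕ → ℝ) (z : ℕ → ℂ) :
    Matrix (Fin (2*m)) (Fin (2*m)) ℂ :=
  fun i j =>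
    if (i : ℕ) = (j : ℕ) then z ((i : ℕ) + 1)
    else if (i : ℕ) + 1 = (j : ℕ) then ((t ((i : ℕ) + 1) : ℝ) : ℂ)
    else if (j : ℕ) + 1 = (i : ℕ) then ((t ((j : ℕ) + 1) : ℝ) : ℂ)
    else 0

/-- The block matrix `M(Z) = [[1, (conj Z / t_m) P_m],[(Z / t_m) P_m, 1]]`. -/
noncomputable def Mop (m : ℕ) (t : ℕ → ℝ) (Z : ℂ) :
    Matrix (Fin (2*m)) (Fin (2*m)) ℂ :=
  fun i j =>
    if i = j then 1
    else if (i : ℕ) + (j : ℕ) + 1 = 2*m then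
      (if (i : ℕ) < m then (starRingEnd ℂ) Z / (t m : ℂ) else Z / (t m : ℂ))
    else 0

/-- The block matrix `Ω = (α/2)·1 + (1/(α t_m))·[[0, conj(Z) P_m],[Z P_m, 0]]`
where `α = sqrt(1 + |Z|/t_m) + sqrt(1 − |Z|/t_m)`. -/
noncomputable def Om (m : ℕ) (t : ℕ → ℝ) (Z : ℂ) :
    Matrix (Fin (2*m)) (Fin (2*m)) ℂ :=
  fun i j =>
    if i = j then
      ((Real.sqrt (1 + ‖Z‖ / t m) + Real.sqrt (1 - ‖Z‖ / t m)) / 2 : ℝ)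
    else if (i : ℕ) + (j : ℕ) + 1 = 2*m then
      (if (i : ℕ) < m then (starRingEnd ℂ) Z else Z) /
        (((Real.sqrt (1 + ‖Z‖ / t m) + Real.sqrt (1 - ‖Z‖ / t m)) : ℝ) * (t m : ℂ))
    else 0


noncomputable def alpha (r : ℝ) : ℝ := √(1 + r) + √(1 - r)

theorem alpha_pos (r : ℝ) : 0 < alpha r := by
  rcases le_or_gt r 0 with h | h
  · exact add_pos_of_nonneg_of_pos (Real.sqrt_nonneg _) (Real.sqrt_pos.2 (by linarith))
  · exact add_pos_of_pos_of_nonneg (Real.sqrt_pos.2 (by linarith)) (Real.sqrt_nonneg _)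

theorem two_mul_lt_alpha_sq {r : ℝ} (hr : r < 1) : 2 * r < alpha r ^ 2 := by
  have hq : √(1 - r) ^ 2 = 1 - r := Real.sq_sqrt (by linarith)
  have hp : 1 + r ≤ √(1 + r) ^ 2 := by
    rcases le_total 0 (1 + r) with h | h
    · rw [Real.sq_sqrt h]
    · nlinarith [sq_nonneg (√(1 + r))]
  have hpq := mul_nonneg (Real.sqrt_nonneg (1 + r)) (Real.sqrt_nonneg (1 - r))
  unfold alpha
  nlinarith

theorem div_alpha_lt_half_alpha {r : ℝ} (hr : r < 1) : r / alpha r < alpha r / 2 := by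
  rw [div_lt_div_iff₀ (alpha_pos r) two_pos]
  nlinarith [two_mul_lt_alpha_sq hr]

theorem half_alpha_sq_add_div_alpha_sq {r : ℝ} (hr : |r| ≤ 1) :
    (alpha r / 2) ^ 2 + (r / alpha r) ^ 2 = 1 := by
  obtain ⟨h₀, h₁⟩ := abs_le.1 hr
  have hp : √(1 + r) ^ 2 = 1 + r := Real.sq_sqrt (by linarith)
  have hq : √(1 - r) ^ 2 = 1 - r := Real.sq_sqrt (by linarith)
  have hα := (alpha_pos r).ne'
  have hpq : (√(1 + r) * √(1 - r)) ^ 2 = 1 - r ^ 2 := by rw [mul_pow, hp, hq]; ring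
  have hα2 : alpha r ^ 2 = 2 + 2 * (√(1 + r) * √(1 - r)) := by
    unfold alpha; linear_combination hp + hq
  field_simp
  linear_combination (alpha r ^ 2 - 2 + 2 * (√(1 + r) * √(1 - r))) * hα2 + 4 * hpq

theorem half_alpha_smul_one_add_inv_alpha_smul_mul_self {A : Type*} [Ring A] [Algebra ℝ A] {r : ℝ}
    (hr : |r| ≤ 1) {B : A} (hB : B * B = r ^ 2 • 1) :
    ((alpha r / 2) • 1 + (alpha r)⁻¹ • B) * ((alpha r / 2) • 1 + (alpha r)⁻¹ • B) = 1 + B := by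
  have hα := (alpha_pos r).ne'
  have h₁ : alpha r / 2 * (alpha r / 2) + (alpha r)⁻¹ * (alpha r)⁻¹ * r ^ 2 = 1 := by
    rw [← half_alpha_sq_add_div_alpha_sq hr]; ring
  have h₂ : alpha r / 2 * (alpha r)⁻¹ + (alpha r)⁻¹ * (alpha r / 2) = 1 := by field_simp; ring
  simp only [add_mul, mul_add, smul_mul_assoc, mul_smul_comm, one_mul, mul_one, hB, smul_smul]
  linear_combination (norm := module) h₁ • (1 : A) + h₂ • B

section PosDef

variable {𝕜 : Type*} [RCLike 𝕜] {n : Type*} [Fintype n] [DecidableEq n]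

theorem posSemidef_smul_one_add_of_mul_self {B : Matrix n n 𝕜} (hB : B.IsHermitian) {β : ℝ}
    (hβ : 0 ≤ β) (hB2 : B * B = (β ^ 2) • 1) : (β • (1 : Matrix n n 𝕜) + B).PosSemidef := by
  rcases hβ.eq_or_lt with rfl | hβ
  · have : B = 0 := by
      rw [← conjTranspose_mul_self_eq_zero, hB.eq, hB2]
      simp
    simp [this, PosSemidef.zero]
  · set C := β • (1 : Matrix n n 𝕜) + B
    have hC : Cᴴ = C := by
      simp [C, conjTranspose_add, conjTranspose_smul, hB.eq]
    have hCC : Cᴴ * C = (2 * β) • C := by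
      rw [hC]
      simp only [C, add_mul, mul_add, smul_mul_assoc, mul_smul_comm, one_mul, mul_one, hB2,
        smul_smul, smul_add]
      module
    have : C = (2 * β)⁻¹ • (Cᴴ * C) := by
      rw [hCC, smul_smul, inv_mul_cancel₀ (by positivity), one_smul]
    rw [this]
    exact (posSemidef_conjTranspose_mul_self C).smul (by positivity)

theorem posDef_smul_one_add_of_mul_self {B : Matrix n n 𝕜} (hB : B.IsHermitian) {β a : ℝ}
    (hβ : 0 ≤ β) (hβa : β < a) (hB2 : B * B = (β ^ 2) • 1) :
    (a • (1 : Matrix n n 𝕜) + B).PosDef := by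
  have h : a • (1 : Matrix n n 𝕜) + B = (a - β) • 1 + (β • 1 + B) := by module
  rw [h]
  exact (PosDef.one.smul (sub_pos.2 hβa)).add_posSemidef
    (posSemidef_smul_one_add_of_mul_self hB hβ hB2)

open scoped MatrixOrder in
theorem Matrix.PosSemidef.eq_of_mul_self_eq {A B : Matrix n n 𝕜} (hA : A.PosSemidef)
    (hB : B.PosSemidef) (h : A * A = B * B) : A = B :=
  (CFC.mul_self_eq_mul_self_iff A B hA.nonneg hB.nonneg).1 h

theorem posDef_half_alpha_smul_one_add_inv_alpha_smul {B : Matrix n n 𝕜} (hB : B.IsHermitian)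
    {r : ℝ} (hr₀ : 0 ≤ r) (hr₁ : r < 1) (hB2 : B * B = r ^ 2 • 1) :
    ((alpha r / 2) • (1 : Matrix n n 𝕜) + (alpha r)⁻¹ • B).PosDef := by
  refine posDef_smul_one_add_of_mul_self (hB.smul (.all _)) (div_nonneg hr₀ (alpha_pos r).le)
    (div_alpha_lt_half_alpha hr₁) ?_
  rw [smul_mul_smul_comm, hB2, smul_smul]
  ring_nf

end PosDef

-- The block matrix `[[0, conj w • P_m], [w • P_m, 0]]`.
noncomputable def antidiagBlock (m : ℕ) (w : ℂ) : Matrix (Fin (2 * m)) (Fin (2 * m)) ℂ :=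
  fun i j => if (i : ℕ) + j + 1 = 2 * m then (if (i : ℕ) < m then starRingEnd ℂ w else w) else 0

theorem antidiagBlock_apply (m : ℕ) (w : ℂ) (i j : Fin (2 * m)) :
    antidiagBlock m w i j =
      if j = i.rev then (if (i : ℕ) < m then starRingEnd ℂ w else w) else 0 := by
  simp only [antidiagBlock, Fin.ext_iff, Fin.val_rev]
  congr 1
  grind

theorem antidiagBlock_isHermitian (m : ℕ) (w : ℂ) : (antidiagBlock m w).IsHermitian := by
  ext i j
  simp only [conjTranspose_apply, antidiagBlock_apply, Fin.rev_eq_iff, eq_comm (a := i)]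
  split_ifs <;> simp_all <;> omega

theorem antidiagBlock_mul_self (m : ℕ) (w : ℂ) :
    antidiagBlock m w * antidiagBlock m w =
      (‖w‖ ^ 2) • (1 : Matrix (Fin (2 * m)) (Fin (2 * m)) ℂ) := by
  ext i k
  simp only [mul_apply, antidiagBlock_apply, ite_mul, zero_mul, Finset.sum_ite_eq',
    Finset.mem_univ, if_true, Fin.rev_rev, Matrix.smul_apply, one_apply]
  rcases eq_or_ne i k with rfl | hik
  · have hrev : (i.rev : ℕ) < m ↔ ¬ (i : ℕ) < m := by rw [Fin.val_rev]; omega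
    by_cases hi : (i : ℕ) < m
    · simp only [if_pos hi, if_neg (hrev.not.2 (not_not.2 hi)), if_true, Complex.conj_mul',
        Complex.ofReal_pow, Complex.real_smul, mul_one]
    · simp only [if_neg hi, if_pos (hrev.2 hi), if_true, Complex.mul_conj', Complex.ofReal_pow,
        Complex.real_smul, mul_one]
  · simp [hik, hik.symm]

theorem Mop_eq (m : ℕ) (t : ℕ → ℝ) (Z : ℂ) : Mop m t Z = 1 + antidiagBlock m (Z / t m) := by
  ext i j
  simp only [Mop, antidiagBlock, Matrix.add_apply, one_apply, map_div₀, Complex.conj_ofReal]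
  split_ifs <;> first | omega | simp

theorem Om_eq (m : ℕ) (t : ℕ → ℝ) (Z : ℂ) :
    Om m t Z =
      (alpha (‖Z‖ / t m) / 2) • 1 + (alpha (‖Z‖ / t m))⁻¹ • antidiagBlock m (Z / t m) := by
  ext i j
  simp only [Om, antidiagBlock, alpha, Matrix.add_apply, Matrix.smul_apply, one_apply, map_div₀,
    Complex.conj_ofReal]
  split_ifs <;> first
    | omega
    | simp only [Complex.real_smul, smul_zero, div_eq_mul_inv, mul_inv]; push_cast; ring

theorem stmt3 (m : ℕ) (t : ℕ → ℝ)
    (htm : 0 < t m)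
    (Z : ℂ) (hZ : ‖Z‖ < t m) :
    (Om m t Z).IsHermitian ∧ (Om m t Z).PosDef ∧
      Om m t Z * Om m t Z = Mop m t Z ∧
      (∀ Ω' : Matrix (Fin (2*m)) (Fin (2*m)) ℂ,
        Ω'.PosDef → Ω' * Ω' = Mop m t Z → Ω' = Om m t Z) := by
  have hr₀ : 0 ≤ ‖Z‖ / t m := by positivity
  have hr₁ : ‖Z‖ / t m < 1 := (div_lt_one htm).2 hZ
  have hB : antidiagBlock m (Z / t m) * antidiagBlock m (Z / t m) = (‖Z‖ / t m) ^ 2 • 1 := by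
    rw [antidiagBlock_mul_self, norm_div, Complex.norm_real, Real.norm_of_nonneg htm.le]
  have hsq : Om m t Z * Om m t Z = Mop m t Z := by
    rw [Om_eq, Mop_eq]
    exact half_alpha_smul_one_add_inv_alpha_smul_mul_self (abs_le.2 ⟨by linarith, hr₁.le⟩) hB
  have hpos : (Om m t Z).PosDef := by
    rw [Om_eq]
    exact posDef_half_alpha_smul_one_add_inv_alpha_smul (antidiagBlock_isHermitian m _) hr₀ hr₁
      hB
  refine ⟨hpos.isHermitian, hpos, hsq, fun Ω hΩ hΩsq => ?_⟩
  exact hΩ.posSemidef.eq_of_mul_self_eq hpos.posSemidef (hΩsq.trans hsq.symm)
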